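/- arXiv:2507.11226 — 4 statements merged into one kernel-verified Lean document; each statement's English description precedes it below -/
import Mathlib

section
/- Let Γ be a connected tetravalent (4-regular) graph with a self-reverse distance magic labeling ℓ. If ℓ is degenerate (there exist vertices u, v with u ≠ u^ℓ, v ≠ v^ℓ, and u adjacent to both v and v^ℓ), then for every vertex w of Γ, the vertices w and w^ℓ are distinct and have identical neighborhoods. -/
open Finset

/-- The label set `I_n = {1-n, 3-n, ..., n-1}`. -/
def ISet (n : ℕ) : Finset ℤ := (Finset.range n).image (fun i : ℕ => 2 * (i : ℤ) + 1 - n)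

open scoped Classical in
/-- Sum of the labels over the neighborhood of `w`. -/
noncomputable def nbrSum {V : Type*} [Fintype V] (G : SimpleGraph V) (ℓ : V → ℤ) (w : V) : ℤ :=
  ∑ x ∈ Finset.univ.filter (fun x => G.Adj w x), ℓ x

open scoped Classical in
/-- The degree of a vertex. -/
noncomputable def gdeg {V : Type*} [Fintype V] (G : SimpleGraph V) (w : V) : ℕ :=
  (Finset.univ.filter (fun x => G.Adj w x)).card

/-- A distance magic labeling: a bijection onto `I_n` with all neighborhood sums `0`. -/
def IsDML {V : Type*} [Fintype V] (G : SimpleGraph V) (ℓ : V → ℤ) : Prop :=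
  Function.Injective ℓ ∧ (∀ x, ℓ x ∈ ISet (Fintype.card V)) ∧
    (∀ i ∈ ISet (Fintype.card V), ∃ x, ℓ x = i) ∧ ∀ w, nbrSum G ℓ w = 0

open scoped Classical in
/-- Cancellation: if `y` is adjacent to both `a` and `f a` (with `f a ≠ a`), then the
neighborhood of `y` is closed under `f`. -/
private lemma nbhd_closed {V : Type*} [Fintype V] (G : SimpleGraph V) (ℓ : V → ℤ)
    (hinj : Function.Injective ℓ) (f : V → V) (hf : ∀ x, ℓ (f x) = -ℓ x)
    (y a : V)
    (hcard : (Finset.univ.filter (fun x => G.Adj y x)).card = 4)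
    (hsum : ∑ x ∈ Finset.univ.filter (fun x => G.Adj y x), ℓ x = 0)
    (ha : G.Adj y a) (hfa : G.Adj y (f a)) (hne : f a ≠ a) :
    ∀ t, G.Adj y t → G.Adj y (f t) := by
  have hfinv : ∀ x, f (f x) = x := fun x => hinj (by rw [hf, hf, neg_neg])
  set s : Finset V := Finset.univ.filter (fun x => G.Adj y x) with hs
  have hmem : ∀ t, t ∈ s ↔ G.Adj y t := by
    intro t; simp [hs]
  have has : a ∈ s := (hmem a).mpr ha
  have hfas : f a ∈ s := (hmem _).mpr hfa
  have hsub : ({a, f a} : Finset V) ⊆ s := by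
    intro t ht
    rcases Finset.mem_insert.mp ht with h | h
    · exact h ▸ has
    · exact (Finset.mem_singleton.mp h) ▸ hfas
  have hpaircard : ({a, f a} : Finset V).card = 2 := by
    rw [Finset.card_insert_of_notMem (by simp [Ne.symm hne]), Finset.card_singleton]
  have hcard' : (s \ {a, f a}).card = 2 := by
    rw [Finset.card_sdiff_of_subset hsub, hcard, hpaircard]
  have hsum' : ∑ x ∈ s \ {a, f a}, ℓ x = 0 := by
    rw [Finset.sum_sdiff_eq_sub hsub, hsum, Finset.sum_pair (Ne.symm hne), hf]
    ring
  obtain ⟨w1, w2, hw12, hw⟩ := Finset.card_eq_two.mp hcard'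
  have hsum2 : ℓ w1 + ℓ w2 = 0 := by
    rw [hw, Finset.sum_pair hw12] at hsum'
    exact hsum'
  have hfw1 : f w1 = w2 := hinj (by rw [hf]; linarith)
  have hw1s : w1 ∈ s := (Finset.sdiff_subset) (hw ▸ (by simp : w1 ∈ ({w1, w2} : Finset V)))
  have hw2s : w2 ∈ s := (Finset.sdiff_subset) (hw ▸ (by simp : w2 ∈ ({w1, w2} : Finset V)))
  intro t ht
  have hts : t ∈ s := (hmem t).mpr ht
  by_cases h1 : t = a
  · exact h1 ▸ hfa
  by_cases h2 : t = f a
  · rw [h2, hfinv]; exact ha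
  have : t ∈ s \ {a, f a} := by
    simp only [Finset.mem_sdiff, Finset.mem_insert, Finset.mem_singleton]
    exact ⟨hts, by tauto⟩
  rw [hw] at this
  rcases Finset.mem_insert.mp this with h | h
  · rw [h, hfw1]; exact (hmem w2).mp hw2s
  · rw [Finset.mem_singleton.mp h, ← hfw1, hfinv]; exact (hmem w1).mp hw1s

open scoped Classical in
/-- If the neighborhood of `x` is closed under `f`, then no neighbor of `x` is fixed by `f`. -/
private lemma no_fixed {V : Type*} [Fintype V] (G : SimpleGraph V) (ℓ : V → ℤ)
    (hinj : Function.Injective ℓ) (f : V → V) (hf : ∀ x, ℓ (f x) = -ℓ x)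
    (x y : V)
    (hcard : (Finset.univ.filter (fun t => G.Adj x t)).card = 4)
    (hcl : ∀ t, G.Adj x t → G.Adj x (f t))
    (hy : G.Adj x y) : f y ≠ y := by
  intro hfy
  have hfinv : ∀ t, f (f t) = t := fun t => hinj (by rw [hf, hf, neg_neg])
  have huniq : ∀ z, f z = z → z = y := by
    intro z hz
    have h1 : ℓ z = 0 := by have := hf z; rw [hz] at this; linarith
    have h2 : ℓ y = 0 := by have := hf y; rw [hfy] at this; linarith
    exact hinj (h1.trans h2.symm)
  set s : Finset V := (Finset.univ.filter (fun t => G.Adj x t)).erase y with hs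
  have hys : y ∈ Finset.univ.filter (fun t => G.Adj x t) := by simp [hy]
  have hcard3 : s.card = 3 := by
    rw [hs, Finset.card_erase_of_mem hys, hcard]
  have hmem : ∀ t, t ∈ s ↔ (t ≠ y ∧ G.Adj x t) := by
    intro t; simp [hs]
  have hcls : ∀ t, t ∈ s → f t ∈ s := by
    intro t ht
    obtain ⟨hty, hadj⟩ := (hmem t).mp ht
    refine (hmem (f t)).mpr ⟨?_, hcl t hadj⟩
    intro h
    exact hty (by rw [← hfinv t, h, hfy])
  have hnofix : ∀ t, t ∈ s → f t ≠ t := by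
    intro t ht h
    exact ((hmem t).mp ht).1 (huniq t h)
  obtain ⟨p, q, r, hpq, hpr, hqr, hpqr⟩ := Finset.card_eq_three.mp hcard3
  have hmem3 : ∀ t, t ∈ s ↔ (t = p ∨ t = q ∨ t = r) := by
    intro t; rw [hpqr]; simp
  have hp : p ∈ s := (hmem3 p).mpr (Or.inl rfl)
  have hq : q ∈ s := (hmem3 q).mpr (Or.inr (Or.inl rfl))
  have hr : r ∈ s := (hmem3 r).mpr (Or.inr (Or.inr rfl))
  have hinjf : Function.Injective f := fun s t h => by rw [← hfinv s, h, hfinv]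
  rcases (hmem3 (f p)).mp (hcls p hp) with h | h | h
  · exact hnofix p hp h
  · -- f p = q, so f q = p; then f r has nowhere to go
    have hfq : f q = p := by rw [← h, hfinv]
    rcases (hmem3 (f r)).mp (hcls r hr) with h' | h' | h'
    · exact hqr (hinjf (hfq.trans h'.symm))
    · exact hpr (hinjf (h.trans h'.symm))
    · exact hnofix r hr h'
  · -- f p = r, so f r = p; then f q has nowhere to go
    have hfr : f r = p := by rw [← h, hfinv]
    rcases (hmem3 (f q)).mp (hcls q hq) with h' | h' | h'
    · exact hqr (hinjf (h'.trans hfr.symm))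
    · exact hnofix q hq h'
    · exact hpq (hinjf (h'.trans h.symm)).symm

/-- If a connected tetravalent graph has a degenerate self-reverse distance magic labeling, then
every vertex `w` satisfies `w ≠ w^ℓ` and `w`, `w^ℓ` have identical neighborhoods. -/
theorem degenerate_forces_twin_neighborhoods {V : Type*} [Fintype V] (G : SimpleGraph V)
    (hconn : G.Connected) (hreg : ∀ w, gdeg G w = 4) (ℓ : V → ℤ) (hdm : IsDML G ℓ)
    (f : V → V) (hf : ∀ x, ℓ (f x) = -ℓ x)
    (hsr : ∀ a b, G.Adj a b ↔ G.Adj (f a) (f b))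
    (hdeg : ∃ a b, f a ≠ a ∧ f b ≠ b ∧ G.Adj a b ∧ G.Adj a (f b)) :
    ∀ w, f w ≠ w ∧ ∀ x, G.Adj w x ↔ G.Adj (f w) x := by
  classical
  obtain ⟨hinj, -, -, hzero⟩ := hdm
  have hfinv : ∀ x, f (f x) = x := fun x => hinj (by rw [hf, hf, neg_neg])
  have hcard : ∀ w, (Finset.univ.filter (fun x => G.Adj w x)).card = 4 := fun w => hreg w
  have hsum : ∀ w, ∑ x ∈ Finset.univ.filter (fun x => G.Adj w x), ℓ x = 0 := fun w => hzero w
  -- neighborhood-equality from closure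
  have lemB : ∀ y, (∀ t, G.Adj y t → G.Adj y (f t)) →
      ∀ t, G.Adj y t ↔ G.Adj (f y) t := by
    intro y hcl t
    have h1 : G.Adj (f y) t ↔ G.Adj y (f t) := by
      rw [hsr (f y) t, hfinv]
    rw [h1]
    constructor
    · exact hcl t
    · intro h
      have := hcl (f t) h
      rwa [hfinv] at this
  -- the propagation step
  have step : ∀ a c, (f a ≠ a ∧ ∀ x, G.Adj a x ↔ G.Adj (f a) x) → G.Adj a c →
      (f c ≠ c ∧ ∀ x, G.Adj c x ↔ G.Adj (f c) x) := by
    intro a c ⟨ha1, ha2⟩ hac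
    have hca : G.Adj c a := hac.symm
    have hcfa : G.Adj c (f a) := ((ha2 c).mp hac).symm
    have hclc : ∀ t, G.Adj c t → G.Adj c (f t) :=
      nbhd_closed G ℓ hinj f hf c a (hcard c) (hsum c) hca hcfa ha1
    have hcla : ∀ t, G.Adj a t → G.Adj a (f t) :=
      fun t ht => (ha2 (f t)).mpr ((hsr a t).mp ht)
    exact ⟨no_fixed G ℓ hinj f hf a c (hcard a) hcla hac, lemB c hclc⟩
  -- base case
  obtain ⟨a, b, hfa, hfb, hab, hafb⟩ := hdeg
  have hbase : f a ≠ a ∧ ∀ x, G.Adj a x ↔ G.Adj (f a) x := by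
    have hcla : ∀ t, G.Adj a t → G.Adj a (f t) :=
      nbhd_closed G ℓ hinj f hf a b (hcard a) (hsum a) hab hafb hfb
    exact ⟨hfa, lemB a hcla⟩
  -- propagation along walks
  have prop : ∀ (u v : V), G.Walk u v →
      (f u ≠ u ∧ ∀ x, G.Adj u x ↔ G.Adj (f u) x) →
      (f v ≠ v ∧ ∀ x, G.Adj v x ↔ G.Adj (f v) x) := by
    intro u v p
    induction p with
    | nil => exact id
    | cons h _ ih => exact fun hu => ih (step _ _ hu h)
  intro w
  obtain ⟨p⟩ := hconn a w
  exact prop a w p hbase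
end

section
/- For every integer m ≥ 3 not divisible by 4, every distance magic labeling ℓ of the wreath graph W(m) satisfies ℓ(x_i) + ℓ(y_i) = 0 for all i ∈ Z_m. -/
open Finset Function

/-- The wreath graph `W(m)`: vertices `(i, b)` with `b = false` for `x_i` and `b = true` for
`y_i`; each of `x_i, y_i` is adjacent to each of `x_{i±1}, y_{i±1}` (indices mod `m`). -/
def wreath (m : ℕ) : SimpleGraph (ZMod m × Bool) where
  Adj p q := p ≠ q ∧ (p.1 = q.1 + 1 ∨ q.1 = p.1 + 1)
  symm := ⟨fun p q h => ⟨h.1.symm, h.2.symm⟩⟩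
  loopless := ⟨fun p h => h.1 rfl⟩

/-!
Write `s(i) = ℓ(x_i) + ℓ(y_i)`. The neighbourhood of `x_i` is `{x_{i±1}, y_{i±1}}`, so the
magic condition at `x_{i+1}` reads `s(i) + s(i+2) = 0`: the function `s` is antiperiodic with
antiperiod `2`, hence also with antiperiod `(2n+1)·2` for every `n`. When `4 ∤ m` some odd multiple
of `2` vanishes in `ℤ/m`, so `s = -s`, i.e. `s = 0`.
-/

theorem exists_dvd_four_mul_add_two {m : ℕ} (h4 : ¬ 4 ∣ m) : ∃ n, m ∣ 4 * n + 2 := by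
  by_cases hodd : m % 2 = 1
  · exact ⟨m / 2, 2, by omega⟩
  · exact ⟨m / 4, 1, by omega⟩

theorem Function.Antiperiodic.eq_zero_of_not_four_dvd {m : ℕ} {R : Type*} [NonAssocRing R]
    [NoZeroDivisors R] [CharZero R] {f : ZMod m → R} (hf : Antiperiodic f 2) (h4 : ¬ 4 ∣ m)
    (i : ZMod m) : f i = 0 := by
  obtain ⟨n, hdvd⟩ := exists_dvd_four_mul_add_two h4
  have hvanish : (n * (2 * 2) + 2 : ZMod m) = 0 := by
    exact_mod_cast (ZMod.natCast_eq_zero_iff _ m).2 (by simpa [mul_comm] using hdvd)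
  simpa [hvanish, CharZero.eq_neg_self_iff] using hf.nat_odd_mul_antiperiodic n i

theorem ZMod.two_ne_zero_of_three_le {m : ℕ} (hm : 3 ≤ m) : (2 : ZMod m) ≠ 0 := by
  intro h
  have hdvd := (ZMod.natCast_eq_zero_iff 2 m).1 (by exact_mod_cast h)
  have := Nat.le_of_dvd two_pos hdvd
  omega

theorem wreath_adj_iff {m : ℕ} (h1 : (1 : ZMod m) ≠ 0) (p q : ZMod m × Bool) :
    (wreath m).Adj p q ↔ q.1 = p.1 - 1 ∨ q.1 = p.1 + 1 := by
  constructor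
  · rintro ⟨-, h | h⟩
    · exact Or.inl (by linear_combination -h)
    · exact Or.inr h
  · rintro (h | h)
    · refine ⟨by rintro rfl; exact h1 (by linear_combination h), Or.inl (by rw [h]; ring)⟩
    · exact ⟨by rintro rfl; exact h1 (by linear_combination -h), Or.inr h⟩

def wreathPairSum {m : ℕ} (ℓ : ZMod m × Bool → ℤ) (i : ZMod m) : ℤ :=
  ℓ (i, false) + ℓ (i, true)

theorem nbrSum_wreath {m : ℕ} [NeZero m] (h2 : (2 : ZMod m) ≠ 0) (ℓ : ZMod m × Bool → ℤ)
    (v : ZMod m × Bool) :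
    nbrSum (wreath m) ℓ v = wreathPairSum ℓ (v.1 - 1) + wreathPairSum ℓ (v.1 + 1) := by
  classical
  have h1 : (1 : ZMod m) ≠ 0 := fun h => h2 (by rw [← one_add_one_eq_two, h, add_zero])
  have hnbr : univ.filter (fun q => (wreath m).Adj v q) = {v.1 - 1, v.1 + 1} ×ˢ univ := by
    ext q
    simp [wreath_adj_iff h1]
  have hsides : v.1 - 1 ≠ v.1 + 1 := fun h => h2 (by linear_combination -h)
  rw [nbrSum, hnbr, sum_product, sum_pair hsides]
  simp only [Fintype.sum_bool, wreathPairSum, add_comm (ℓ (_, true))]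

/-- If `m ≥ 3` is not divisible by `4`, then every distance magic labeling `ℓ` of the wreath
graph `W(m)` satisfies `ℓ(x_i) + ℓ(y_i) = 0` for all `i`. -/
theorem wreath_not_four_dvd_paired (m : ℕ) [NeZero m] (hm : 3 ≤ m) (h4 : ¬ (4 ∣ m))
    (ℓ : ZMod m × Bool → ℤ) (hdm : IsDML (wreath m) ℓ) :
    ∀ i : ZMod m, ℓ (i, false) + ℓ (i, true) = 0 := by
  have h2 := ZMod.two_ne_zero_of_three_le hm
  have hanti : Antiperiodic (wreathPairSum ℓ) 2 := fun j => by
    have hmagic := hdm.2.2.2 (j + 1, false)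
    rw [nbrSum_wreath h2, add_sub_cancel_right, add_assoc, one_add_one_eq_two] at hmagic
    exact eq_neg_of_add_eq_zero_right hmagic
  exact hanti.eq_zero_of_not_four_dvd h4
end

section
/- For every integer m ≥ 3, the labeling ℓ of the wreath graph W(m) defined by ℓ(x_i) = 2i+1 and ℓ(y_i) = -(2i+1) for i ∈ {0,1,...,m-1} is a distance magic labeling, and it is self-reverse. -/
open Finset

/-!
Swapping `x_i ↔ y_i` negates the labeling and preserves adjacency, since adjacency in `W(m)`
only depends on the first coordinates. For `m ≥ 2` the swap also maps each neighbourhood to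
itself (a neighbour never shares its first coordinate with the centre), so the neighbourhood
splits into pairs `{v, v^ℓ}` of labels summing to `0`. The labels `±(2i+1)` are distinct odd
numbers in `I_{2m}`, hence exhaust it by counting.
-/

open Function

theorem card_ISet (n : ℕ) : (ISet n).card = n := by
  rw [ISet, card_image_of_injective _ (fun a b h => by simpa using h), card_range]

theorem isDML_of_injective {V : Type*} [Fintype V] (G : SimpleGraph V) {ℓ : V → ℤ}
    (hinj : Injective ℓ) (hmem : ∀ x, ℓ x ∈ ISet (Fintype.card V))
    (hsum : ∀ w, nbrSum G ℓ w = 0) : IsDML G ℓ := by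
  refine ⟨hinj, hmem, fun i hi => ?_, hsum⟩
  have himage : univ.image ℓ = ISet (Fintype.card V) :=
    eq_of_subset_of_card_le (by simpa [subset_iff] using hmem)
      (by rw [card_ISet, card_image_of_injective _ hinj, card_univ])
  simpa [← himage] using hi

theorem nbrSum_eq_zero_of_involutive {V : Type*} [Fintype V] (G : SimpleGraph V) {ℓ : V → ℤ}
    {σ : V → V} (hσ : Involutive σ) (hadj : ∀ w x, G.Adj w x → G.Adj w (σ x))
    (hℓ : ∀ x, ℓ (σ x) = -ℓ x) (w : V) : nbrSum G ℓ w = 0 := by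
  unfold nbrSum
  refine sum_involution (fun x _ => σ x) (fun x _ => by simp [hℓ]) (fun x _ hx hfix => ?_)
    (fun x hx => by simpa using hadj w x (by simpa using hx)) (fun x _ => hσ x)
  exact hx (by linarith [hℓ x, congrArg ℓ hfix])

namespace Wreath

variable {m : ℕ}

theorem adj_swap_iff (p q : ZMod m × Bool) :
    (wreath m).Adj (p.1, !p.2) (q.1, !q.2) ↔ (wreath m).Adj p q := by
  simp [wreath, Prod.ext_iff]

theorem adj_swap_right [Fact (1 < m)] {w p : ZMod m × Bool} (h : (wreath m).Adj w p) :
    (wreath m).Adj w (p.1, !p.2) := by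
  refine ⟨fun hw => ?_, h.2⟩
  rcases h.2 with h1 | h1 <;> simp [hw] at h1

def label (m : ℕ) (p : ZMod m × Bool) : ℤ :=
  if p.2 then -(2 * (p.1.val : ℤ) + 1) else 2 * (p.1.val : ℤ) + 1

theorem label_swap (p : ZMod m × Bool) : label m (p.1, !p.2) = -label m p := by
  cases h : p.2 <;> simp [label, h]

theorem label_injective [NeZero m] : Injective (label m) := by
  rintro ⟨i, b⟩ ⟨j, c⟩ h
  have hij : i.val = j.val ∧ b = c := by
    cases b <;> cases c <;>
      simp only [label, Bool.false_eq_true, Bool.true_eq_false, if_true, if_false, and_true,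
        and_false] at h ⊢ <;> omega
  rw [ZMod.val_injective m hij.1, hij.2]

theorem label_mem_ISet [NeZero m] (p : ZMod m × Bool) : label m p ∈ ISet (2 * m) := by
  have hi := ZMod.val_lt p.1
  simp only [ISet, mem_image, mem_range, label]
  cases p.2
  · exact ⟨p.1.val + m, by omega, by push_cast; ring⟩
  · exact ⟨m - 1 - p.1.val, by omega, by simp only [if_true]; omega⟩

end Wreath

/-- The labeling `ℓ(x_i) = 2i+1`, `ℓ(y_i) = -(2i+1)` of the wreath graph `W(m)` (for `m ≥ 3`)
is a distance magic labeling, and it is self-reverse (the pairing `v ↦ v^ℓ` swaps `x_i ↔ y_i`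
and preserves adjacency). -/
theorem wreath_natural_labeling_selfReverse (m : ℕ) [NeZero m] (hm : 3 ≤ m)
    (ℓ : ZMod m × Bool → ℤ)
    (hl : ∀ p : ZMod m × Bool,
      ℓ p = if p.2 then -(2 * (p.1.val : ℤ) + 1) else 2 * (p.1.val : ℤ) + 1) :
    IsDML (wreath m) ℓ ∧ (∀ p : ZMod m × Bool, ℓ (p.1, !p.2) = -ℓ p) ∧
      ∀ p q : ZMod m × Bool,
        (wreath m).Adj p q ↔ (wreath m).Adj (p.1, !p.2) (q.1, !q.2) := by
  obtain rfl : ℓ = Wreath.label m := funext hl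
  have : Fact (1 < m) := ⟨by omega⟩
  have hcard : Fintype.card (ZMod m × Bool) = 2 * m := by simp [ZMod.card, mul_comm]
  have hsum : ∀ w, nbrSum (wreath m) (Wreath.label m) w = 0 :=
    nbrSum_eq_zero_of_involutive _ (fun p => by simp) (fun _ _ => Wreath.adj_swap_right)
      Wreath.label_swap
  exact ⟨isDML_of_injective _ Wreath.label_injective (hcard ▸ Wreath.label_mem_ISet) hsum,
    Wreath.label_swap, fun p q => (Wreath.adj_swap_iff p q).symm⟩
end

section
/- Let Γ and Γ' be 2k-regular graphs (k ≥ 2) with distance magic labelings ℓ and ℓ'. Let C = (u_0,...,u_{d-1}) and C' = (v_0,...,v_{d-1}) be cyclets of even length d in Γ and Γ' respectively. Suppose: (i) every vertex of Γ' has exactly k neighbors with nonnegative ℓ'-label and k with negative ℓ'-label; (ii) the edges of C' alternate between having both endvertices' labels of the same sign-class and of different sign-classes (with respect to the partition into nonnegative and negative ℓ'-labels); (iii) ℓ(u_{i-1}) + ℓ(u_{i+1}) = ℓ'(v_{i-1}) + ℓ'(v_{i+1}) for each i ∈ Z_d. Then the merged graph Γ ⊕^C_{C'} Γ' is a 2k-regular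 distance magic graph, with distance magic labeling given by keeping ℓ on V(Γ) and shifting ℓ' by +n on vertices with nonnegative ℓ'-label and by -n on vertices with negative ℓ'-label, where n = |V(Γ)|. -/
open Finset

/-- The merge `Γ ⊕^C_{C'} Γ'` of two graphs along cyclets `u` and `v` of length `d`:
delete the cyclet edges and add the edges `u_i v_{i+1}` and `v_i u_{i+1}`. -/
def mergeGraph {V V' : Type*} (G : SimpleGraph V) (G' : SimpleGraph V') (d : ℕ)
    (u : ZMod d → V) (v : ZMod d → V') : SimpleGraph (V ⊕ V') where
  Adj a b :=
    match a, b with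
    | Sum.inl a, Sum.inl b =>
        G.Adj a b ∧ ¬ ∃ i, (a = u i ∧ b = u (i + 1)) ∨ (b = u i ∧ a = u (i + 1))
    | Sum.inr a, Sum.inr b =>
        G'.Adj a b ∧ ¬ ∃ i, (a = v i ∧ b = v (i + 1)) ∨ (b = v i ∧ a = v (i + 1))
    | Sum.inl a, Sum.inr b => ∃ i, (a = u i ∧ b = v (i + 1)) ∨ (b = v i ∧ a = u (i + 1))
    | Sum.inr b, Sum.inl a => ∃ i, (a = u i ∧ b = v (i + 1)) ∨ (b = v i ∧ a = u (i + 1))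
  symm := ⟨by
    rintro (a | a) (b | b) h
    · exact ⟨h.1.symm, fun ⟨i, hi⟩ => h.2 ⟨i, hi.symm⟩⟩
    · exact h
    · exact h
    · exact ⟨h.1.symm, fun ⟨i, hi⟩ => h.2 ⟨i, hi.symm⟩⟩⟩
  loopless := ⟨by
    rintro (a | a) h
    · exact G.loopless.irrefl a h.1
    · exact G'.loopless.irrefl a h.1⟩

open scoped Classical in
/-- The number of neighbors of `w` satisfying the predicate `p`. -/
noncomputable def nbrCountP {V : Type*} [Fintype V] (G : SimpleGraph V) (p : V → Prop)
    (w : V) : ℕ :=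
  (Finset.univ.filter (fun x => G.Adj w x ∧ p x)).card

/-! Every vertex of the merge keeps its degree: a cyclet vertex `u_j` loses its two cyclet
neighbours `u_{j±1}` and gains `v_{j±1}`, and symmetrically for `v_j`. For the magic sums, the
shift `±n` contributes nothing on a balanced neighbourhood of `Γ'`, and it cancels on
`{v_{j-1}, v_{j+1}}`, whose labels have opposite signs because `C'` alternates; what remains
is exchanging `ℓ(u_{j-1}) + ℓ(u_{j+1})` for `ℓ'(v_{j-1}) + ℓ'(v_{j+1})`, which is the
compatibility condition. Balance also forces `|V(Γ')|` to be even, which makes the shifted labels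
fill `I_{n + |V(Γ')|}` exactly. The merge is symmetric under exchanging `(Γ, C)` with
`(Γ', C')`, so only neighbourhoods of vertices of `Γ` need to be computed. -/

lemma mem_ISet_iff {n : ℕ} {j : ℤ} : j ∈ ISet n ↔ -n < j ∧ j < n ∧ (j + n) % 2 = 1 := by
  simp only [ISet, Finset.mem_image, Finset.mem_range]
  constructor
  · rintro ⟨i, hi, rfl⟩
    omega
  · rintro ⟨hlo, hhi, hodd⟩
    exact ⟨((j + n) / 2).toNat, by omega, by omega⟩

lemma ZMod.two_ne_zero_of_three_le_s11 {d : ℕ} (hd : 3 ≤ d) : (2 : ZMod d) ≠ 0 := by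
  intro h
  have hdvd : d ∣ 2 := (ZMod.natCast_eq_zero_iff 2 d).1 (by exact_mod_cast h)
  have := Nat.le_of_dvd two_pos hdvd
  omega

open scoped Classical in
lemma nbrSum_eq_sum_ite {V : Type*} [Fintype V] (G : SimpleGraph V) (f : V → ℤ) (w : V) :
    nbrSum G f w = ∑ x, if G.Adj w x then f x else 0 := by
  rw [nbrSum, Finset.sum_filter]

lemma natCast_gdeg {V : Type*} [Fintype V] (G : SimpleGraph V) (w : V) :
    (gdeg G w : ℤ) = nbrSum G (fun _ => 1) w := by
  simp [gdeg, nbrSum]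

lemma exists_cyclet_pair_iff {W X : Type*} {d : ℕ} {w : ZMod d → W} (hw : Function.Injective w)
    (z : ZMod d → X) (j : ZMod d) (b : X) :
    (∃ i, (w j = w i ∧ b = z (i + 1)) ∨ (b = z i ∧ w j = w (i + 1))) ↔
      b = z (j + 1) ∨ b = z (j - 1) := by
  constructor
  · rintro ⟨i, ⟨hij, rfl⟩ | ⟨rfl, hij⟩⟩
    · rw [hw hij]
      exact Or.inl rfl
    · rw [hw hij, add_sub_cancel_right]
      exact Or.inr rfl
  · rintro (rfl | rfl)
    · exact ⟨j, Or.inl ⟨rfl, rfl⟩⟩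
    · exact ⟨j - 1, Or.inr ⟨rfl, by rw [sub_add_cancel]⟩⟩

lemma sum_ite_and_not_or_eq {W : Type*} [Fintype W] [DecidableEq W] {p : W → Prop}
    [DecidablePred p] (g : W → ℤ) {x y : W} (hx : p x) (hy : p y) (hxy : x ≠ y) :
    (∑ b, if p b ∧ ¬ (b = x ∨ b = y) then g b else 0) =
      (∑ b, if p b then g b else 0) - g x - g y := by
  have hpt (b : W) : (if p b ∧ ¬ (b = x ∨ b = y) then g b else 0) =
      (if p b then g b else 0) - (if b = x then g b else 0) - (if b = y then g b else 0) := by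
    by_cases hbx : b = x
    · subst hbx; simp [hx, hxy]
    by_cases hby : b = y
    · subst hby; simp [hy, hbx]
    simp [hbx, hby]
  simp only [hpt, Finset.sum_sub_distrib, Finset.sum_ite_eq', Finset.mem_univ, if_true]

lemma sum_ite_eq_or_eq {W : Type*} [Fintype W] [DecidableEq W] (g : W → ℤ) {x y : W}
    (hxy : x ≠ y) : (∑ b, if b = x ∨ b = y then g b else 0) = g x + g y := by
  rw [← Finset.sum_filter, show univ.filter (fun b => b = x ∨ b = y) = {x, y} by ext; simp,
    Finset.sum_pair hxy]

section Merge

variable {V V' : Type*} {G : SimpleGraph V} {G' : SimpleGraph V'} {d : ℕ} {u : ZMod d → V}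
  {v : ZMod d → V'}

lemma mergeGraph_adj_swap (x y : V' ⊕ V) :
    (mergeGraph G G' d u v).Adj x.swap y.swap ↔ (mergeGraph G' G d v u).Adj x y := by
  rcases x with a | a <;> rcases y with b | b
  · exact Iff.rfl
  · exact exists_congr fun _ => or_comm
  · exact exists_congr fun _ => or_comm
  · exact Iff.rfl

variable [Fintype V] [Fintype V']

lemma nbrSum_mergeGraph_inr (f : V ⊕ V' → ℤ) (c : V') :
    nbrSum (mergeGraph G G' d u v) f (Sum.inr c) =
      nbrSum (mergeGraph G' G d v u) (f ∘ Sum.swap) (Sum.inl c) := by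
  classical
  rw [nbrSum_eq_sum_ite, nbrSum_eq_sum_ite, ← (Equiv.sumComm V' V).sum_comp]
  exact Fintype.sum_congr _ _ fun y => by
    simp only [Equiv.sumComm_apply, Function.comp_apply,
      ← mergeGraph_adj_swap (Sum.inl c) y, Sum.swap_inl]

lemma nbrSum_mergeGraph_inl_of_notMem {a : V} (ha : a ∉ Set.range u) (f : V ⊕ V' → ℤ) :
    nbrSum (mergeGraph G G' d u v) f (Sum.inl a) = nbrSum G (f ∘ Sum.inl) a := by
  classical
  have hcyc : ¬ ∃ i, a = u i ∨ a = u (i + 1) := by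
    rintro ⟨i, h | h⟩
    exacts [ha ⟨i, h.symm⟩, ha ⟨i + 1, h.symm⟩]
  have hV (b : V) : (mergeGraph G G' d u v).Adj (Sum.inl a) (Sum.inl b) ↔ G.Adj a b :=
    and_iff_left fun ⟨i, h⟩ => hcyc ⟨i, h.imp And.left And.right⟩
  have hV' (c : V') : ¬ (mergeGraph G G' d u v).Adj (Sum.inl a) (Sum.inr c) :=
    fun ⟨i, h⟩ => hcyc ⟨i, h.imp And.left And.right⟩
  rw [nbrSum_eq_sum_ite, nbrSum_eq_sum_ite, Fintype.sum_sum_type]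
  simp only [hV, hV', if_false, Finset.sum_const_zero, add_zero, Function.comp_apply]

lemma nbrSum_mergeGraph_inl_apply (hu : Function.Injective u) (hv : Function.Injective v)
    (hu_adj : ∀ i, G.Adj (u i) (u (i + 1))) (h2 : (2 : ZMod d) ≠ 0) (f : V ⊕ V' → ℤ)
    (j : ZMod d) :
    nbrSum (mergeGraph G G' d u v) f (Sum.inl (u j)) =
      nbrSum G (f ∘ Sum.inl) (u j) - f (Sum.inl (u (j + 1))) - f (Sum.inl (u (j - 1))) +
        (f (Sum.inr (v (j + 1))) + f (Sum.inr (v (j - 1)))) := by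
  classical
  have hne : j + 1 ≠ j - 1 := fun h => h2 (by linear_combination h)
  have hV (b : V) : (mergeGraph G G' d u v).Adj (Sum.inl (u j)) (Sum.inl b) ↔
      G.Adj (u j) b ∧ ¬ (b = u (j + 1) ∨ b = u (j - 1)) :=
    and_congr_right' (not_congr (exists_cyclet_pair_iff hu u j b))
  have hV' (c : V') : (mergeGraph G G' d u v).Adj (Sum.inl (u j)) (Sum.inr c) ↔
      c = v (j + 1) ∨ c = v (j - 1) :=
    exists_cyclet_pair_iff hu v j c
  have hprev : G.Adj (u j) (u (j - 1)) := by simpa using (hu_adj (j - 1)).symm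
  rw [nbrSum_eq_sum_ite, nbrSum_eq_sum_ite, Fintype.sum_sum_type]
  simp only [hV, hV', Function.comp_apply]
  rw [sum_ite_and_not_or_eq _ (hu_adj j) hprev (hu.ne hne), sum_ite_eq_or_eq _ (hv.ne hne)]

lemma gdeg_mergeGraph_inl (hu : Function.Injective u) (hv : Function.Injective v)
    (hu_adj : ∀ i, G.Adj (u i) (u (i + 1))) (h2 : (2 : ZMod d) ≠ 0) (a : V) :
    gdeg (mergeGraph G G' d u v) (Sum.inl a) = gdeg G a := by
  zify
  rw [natCast_gdeg, natCast_gdeg]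
  by_cases ha : a ∈ Set.range u
  · obtain ⟨j, rfl⟩ := ha
    rw [nbrSum_mergeGraph_inl_apply hu hv hu_adj h2, Function.comp_def]
    ring
  · exact nbrSum_mergeGraph_inl_of_notMem ha _

lemma gdeg_mergeGraph_of_regular (hu : Function.Injective u) (hv : Function.Injective v)
    (hu_adj : ∀ i, G.Adj (u i) (u (i + 1))) (hv_adj : ∀ i, G'.Adj (v i) (v (i + 1)))
    (h2 : (2 : ZMod d) ≠ 0) {r : ℕ} (hG : ∀ a, gdeg G a = r) (hG' : ∀ c, gdeg G' c = r) :
    ∀ w, gdeg (mergeGraph G G' d u v) w = r := by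
  rintro (a | c)
  · rw [gdeg_mergeGraph_inl hu hv hu_adj h2, hG]
  · zify
    rw [natCast_gdeg, nbrSum_mergeGraph_inr, ← hG' c, ← gdeg_mergeGraph_inl hv hu hv_adj h2,
      natCast_gdeg]
    rfl

lemma nbrSum_mergeGraph_inl_sumElim_eq_zero (hu : Function.Injective u)
    (hv : Function.Injective v) (hu_adj : ∀ i, G.Adj (u i) (u (i + 1))) (h2 : (2 : ZMod d) ≠ 0)
    {f : V → ℤ} {g : V' → ℤ} (hf : ∀ a, nbrSum G f a = 0)
    (hfg : ∀ j, f (u (j - 1)) + f (u (j + 1)) = g (v (j - 1)) + g (v (j + 1))) (a : V) :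
    nbrSum (mergeGraph G G' d u v) (Sum.elim f g) (Sum.inl a) = 0 := by
  by_cases ha : a ∈ Set.range u
  · obtain ⟨j, rfl⟩ := ha
    rw [nbrSum_mergeGraph_inl_apply hu hv hu_adj h2]
    simp only [Sum.elim_inl, Sum.elim_inr, Sum.elim_comp_inl, hf]
    linarith [hfg j]
  · rw [nbrSum_mergeGraph_inl_of_notMem ha, Sum.elim_comp_inl, hf]

lemma nbrSum_mergeGraph_sumElim_eq_zero (hu : Function.Injective u) (hv : Function.Injective v)
    (hu_adj : ∀ i, G.Adj (u i) (u (i + 1))) (hv_adj : ∀ i, G'.Adj (v i) (v (i + 1)))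
    (h2 : (2 : ZMod d) ≠ 0) {f : V → ℤ} {g : V' → ℤ} (hf : ∀ a, nbrSum G f a = 0)
    (hg : ∀ c, nbrSum G' g c = 0)
    (hfg : ∀ j, f (u (j - 1)) + f (u (j + 1)) = g (v (j - 1)) + g (v (j + 1))) :
    ∀ w, nbrSum (mergeGraph G G' d u v) (Sum.elim f g) w = 0
  | .inl a => nbrSum_mergeGraph_inl_sumElim_eq_zero hu hv hu_adj h2 hf hfg a
  | .inr c => by
    rw [nbrSum_mergeGraph_inr, Sum.elim_swap]
    exact nbrSum_mergeGraph_inl_sumElim_eq_zero hv hu hv_adj h2 hg (fun j => (hfg j).symm) c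

end Merge

section SignShift

variable {V : Type*}

def signShift (n : ℤ) (ℓ : V → ℤ) (x : V) : ℤ := if 0 ≤ ℓ x then ℓ x + n else ℓ x - n

lemma signShift_add_signShift (n : ℤ) (ℓ : V → ℤ) {a b : V} (h : ¬ (0 ≤ ℓ a ↔ 0 ≤ ℓ b)) :
    signShift n ℓ a + signShift n ℓ b = ℓ a + ℓ b := by
  unfold signShift
  split_ifs <;> first | tauto | ring

lemma nbrSum_signShift [Fintype V] (G : SimpleGraph V) (n : ℤ) (ℓ : V → ℤ) {w : V}
    (hbal : nbrCountP G (fun x => 0 ≤ ℓ x) w = nbrCountP G (fun x => ℓ x < 0) w) :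
    nbrSum G (signShift n ℓ) w = nbrSum G ℓ w := by
  classical
  have hshift (x : V) : signShift n ℓ x = ℓ x + if 0 ≤ ℓ x then n else -n := by
    unfold signShift
    split_ifs <;> ring
  simp only [nbrCountP, ← not_le] at hbal
  simp only [nbrSum, hshift, Finset.sum_add_distrib, Finset.sum_ite, Finset.sum_const,
    Finset.filter_filter, ← hbal, smul_neg, add_neg_cancel, add_zero]

end SignShift

lemma not_iff_of_alternating {d : ℕ} {p : ZMod d → Prop}
    (halt : ∀ i, (p i ↔ p (i + 1)) ↔ ¬ (p (i + 1) ↔ p (i + 2))) (j : ZMod d) :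
    ¬ (p (j - 1) ↔ p (j + 1)) := by
  have h := halt (j - 1)
  rw [sub_add_cancel, show j - 1 + 2 = j + 1 by ring] at h
  tauto

lemma even_card_of_nbrCountP_eq {V : Type*} [Fintype V] {G : SimpleGraph V} {k : ℕ}
    (hk : 0 < k) (hreg : ∀ w, gdeg G w = 2 * k) {p : V → Prop}
    (hp : ∀ w, nbrCountP G p w = k) : Even (Fintype.card V) := by
  classical
  have hcount := Finset.card_mul_eq_card_mul G.Adj (s := Finset.univ)
    (t := Finset.univ.filter p) (m := k) (n := 2 * k)
    (fun w _ => by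
      rw [← hp w, nbrCountP, Finset.bipartiteAbove, Finset.filter_filter]
      simp only [and_comm])
    (fun x _ => by
      rw [← hreg x, gdeg, Finset.bipartiteBelow]
      simp only [SimpleGraph.adj_comm])
  rw [Finset.card_univ, ← mul_assoc, mul_comm _ 2] at hcount
  exact ⟨_, (Nat.eq_of_mul_eq_mul_right hk hcount).trans (two_mul _)⟩

section Labels

variable {V V' : Type*} {ℓ : V → ℤ} {ℓ' : V' → ℤ} {n n' : ℕ}

lemma injective_sumElim_signShift (hinj : Function.Injective ℓ)
    (hinj' : Function.Injective ℓ') (hmem : ∀ a, ℓ a ∈ ISet n) :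
    Function.Injective (Sum.elim ℓ (signShift n ℓ')) := by
  have hbound (a : V) := mem_ISet_iff.1 (hmem a)
  rintro (a | c) (b | e) h <;> simp only [Sum.elim_inl, Sum.elim_inr, signShift] at h
  · rw [hinj h]
  · have := hbound a; split_ifs at h <;> omega
  · have := hbound b; split_ifs at h <;> omega
  · split_ifs at h <;> first | omega | rw [hinj' (by omega : ℓ' c = ℓ' e)]

lemma sumElim_signShift_mem_ISet (heven : Even n') (hmem : ∀ a, ℓ a ∈ ISet n)
    (hmem' : ∀ c, ℓ' c ∈ ISet n') (x : V ⊕ V') :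
    Sum.elim ℓ (signShift n ℓ') x ∈ ISet (n + n') := by
  obtain ⟨m, hm⟩ := heven
  rcases x with a | c
  · have := mem_ISet_iff.1 (hmem a)
    rw [Sum.elim_inl, mem_ISet_iff]
    omega
  · have := mem_ISet_iff.1 (hmem' c)
    rw [Sum.elim_inr, signShift, mem_ISet_iff]
    split_ifs <;> omega

lemma exists_sumElim_signShift_eq (heven : Even n') (hsurj : ∀ i ∈ ISet n, ∃ a, ℓ a = i)
    (hsurj' : ∀ i ∈ ISet n', ∃ c, ℓ' c = i) :
    ∀ i ∈ ISet (n + n'), ∃ x, Sum.elim ℓ (signShift n ℓ') x = i := by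
  obtain ⟨m, hm⟩ := heven
  intro i hi
  rw [mem_ISet_iff] at hi
  by_cases hlo : i ≤ -n
  · obtain ⟨c, hc⟩ := hsurj' (i + n) (mem_ISet_iff.2 (by omega))
    exact ⟨Sum.inr c, by rw [Sum.elim_inr, signShift, if_neg (by omega)]; omega⟩
  by_cases hhi : n ≤ i
  · obtain ⟨c, hc⟩ := hsurj' (i - n) (mem_ISet_iff.2 (by omega))
    exact ⟨Sum.inr c, by rw [Sum.elim_inr, signShift, if_pos (by omega)]; omega⟩
  obtain ⟨a, ha⟩ := hsurj i (mem_ISet_iff.2 (by omega))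
  exact ⟨Sum.inl a, ha⟩

end Labels

theorem merge_isDML_general {V V' : Type*} [Fintype V] [Fintype V']
    (G : SimpleGraph V) (G' : SimpleGraph V') (k : ℕ) (hk : 2 ≤ k)
    (hreg : ∀ w, gdeg G w = 2 * k) (hreg' : ∀ w, gdeg G' w = 2 * k)
    (ℓ : V → ℤ) (ℓ' : V' → ℤ) (hdm : IsDML G ℓ) (hdm' : IsDML G' ℓ')
    (d : ℕ) (hd3 : 3 ≤ d)
    (u : ZMod d → V) (v : ZMod d → V')
    (hu_inj : Function.Injective u) (hv_inj : Function.Injective v)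
    (hu_adj : ∀ i, G.Adj (u i) (u (i + 1))) (hv_adj : ∀ i, G'.Adj (v i) (v (i + 1)))
    (hbal : ∀ w, nbrCountP G' (fun x => 0 ≤ ℓ' x) w = k ∧
      nbrCountP G' (fun x => ℓ' x < 0) w = k)
    (halt : ∀ i : ZMod d,
      ((0 ≤ ℓ' (v i)) ↔ (0 ≤ ℓ' (v (i + 1)))) ↔
        ¬ ((0 ≤ ℓ' (v (i + 1))) ↔ (0 ≤ ℓ' (v (i + 2)))))
    (hcomp : ∀ i : ZMod d, ℓ (u (i - 1)) + ℓ (u (i + 1)) = ℓ' (v (i - 1)) + ℓ' (v (i + 1))) :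
    (∀ w, gdeg (mergeGraph G G' d u v) w = 2 * k) ∧
      IsDML (mergeGraph G G' d u v)
        (Sum.elim ℓ (fun x => if 0 ≤ ℓ' x then ℓ' x + (Fintype.card V : ℤ)
          else ℓ' x - (Fintype.card V : ℤ))) := by
  obtain ⟨hinj, hmem, hsurj, hmagic⟩ := hdm
  obtain ⟨hinj', hmem', hsurj', hmagic'⟩ := hdm'
  have h2 := ZMod.two_ne_zero_of_three_le_s11 hd3
  have heven : Even (Fintype.card V') :=
    even_card_of_nbrCountP_eq (by omega) hreg' fun w => (hbal w).1
  have hmagic_shift (c : V') : nbrSum G' (signShift (Fintype.card V) ℓ') c = 0 := by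
    rw [nbrSum_signShift G' _ ℓ' ((hbal c).1.trans (hbal c).2.symm), hmagic']
  have hcomp_shift (j : ZMod d) : ℓ (u (j - 1)) + ℓ (u (j + 1)) =
      signShift (Fintype.card V) ℓ' (v (j - 1)) + signShift (Fintype.card V) ℓ' (v (j + 1)) :=
    (hcomp j).trans (signShift_add_signShift _ ℓ' (not_iff_of_alternating halt j)).symm
  refine ⟨gdeg_mergeGraph_of_regular hu_inj hv_inj hu_adj hv_adj h2 hreg hreg', ?_, ?_, ?_,
    nbrSum_mergeGraph_sumElim_eq_zero hu_inj hv_inj hu_adj hv_adj h2 hmagic hmagic_shift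
      hcomp_shift⟩
  · exact injective_sumElim_signShift hinj hinj' hmem
  · rw [Fintype.card_sum]
    exact sumElim_signShift_mem_ISet heven hmem hmem'
  · rw [Fintype.card_sum]
    exact exists_sumElim_signShift_eq heven hsurj hsurj'

/-- The merge of two `2k`-regular distance magic graphs along compatible cyclets of even length,
where the second labeling is balanced and its cyclet is alternating, is again a `2k`-regular
distance magic graph; the labeling keeps `ℓ` on `Γ` and shifts `ℓ'` by `±n` according to the
sign of `ℓ'`. -/
theorem merge_isDML {V V' : Type*} [Fintype V] [Fintype V']
    (G : SimpleGraph V) (G' : SimpleGraph V') (k : ℕ) (hk : 2 ≤ k)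
    (hreg : ∀ w, gdeg G w = 2 * k) (hreg' : ∀ w, gdeg G' w = 2 * k)
    (ℓ : V → ℤ) (ℓ' : V' → ℤ) (hdm : IsDML G ℓ) (hdm' : IsDML G' ℓ')
    (d : ℕ) (hd3 : 3 ≤ d) (hdeven : Even d)
    (u : ZMod d → V) (v : ZMod d → V')
    (hu_inj : Function.Injective u) (hv_inj : Function.Injective v)
    (hu_adj : ∀ i, G.Adj (u i) (u (i + 1))) (hv_adj : ∀ i, G'.Adj (v i) (v (i + 1)))
    (hbal : ∀ w, nbrCountP G' (fun x => 0 ≤ ℓ' x) w = k ∧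
      nbrCountP G' (fun x => ℓ' x < 0) w = k)
    (halt : ∀ i : ZMod d,
      ((0 ≤ ℓ' (v i)) ↔ (0 ≤ ℓ' (v (i + 1)))) ↔
        ¬ ((0 ≤ ℓ' (v (i + 1))) ↔ (0 ≤ ℓ' (v (i + 2)))))
    (hcomp : ∀ i : ZMod d, ℓ (u (i - 1)) + ℓ (u (i + 1)) = ℓ' (v (i - 1)) + ℓ' (v (i + 1))) :
    (∀ w, gdeg (mergeGraph G G' d u v) w = 2 * k) ∧
      IsDML (mergeGraph G G' d u v)
        (Sum.elim ℓ (fun x => if 0 ≤ ℓ' x then ℓ' x + (Fintype.card V : ℤ)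
          else ℓ' x - (Fintype.card V : ℤ))) :=
  merge_isDML_general G G' k hk hreg hreg' ℓ ℓ' hdm hdm' d hd3 u v hu_inj hv_inj hu_adj hv_adj hbal
    halt hcomp
end
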